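/- (Theorem A: uniqueness of interval decompositions.) Let P be a poset and V a persistence module indexed by P with two interval decompositions V = ⊕_{U ∈ A} U and V = ⊕_{W ∈ B} W. Let I be an interval in P, and set C = {U ∈ A | U ≅ M(I)} and C' = {W ∈ B | W ≅ M(I)}. Then |C| = |C'| (the sets C and C' have the same cardinality, possibly infinite). -/

import Mathlib

universe u v w w'

/-- A persistence module indexed by a poset `P`, over a field `k`. -/
structure PersMod (k : Type u) [Field k] (P : Type v) [PartialOrder P] :
    Type (max u v (w + 1)) where
  space : P → Type w
  [acg : ∀ x, AddCommGroup (space x)]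
  [mod : ∀ x, Module k (space x)]
  map : ∀ {x y : P}, x ≤ y → (space x →ₗ[k] space y)
  map_id : ∀ x : P, map (le_refl x) = LinearMap.id
  map_comp : ∀ {x y z : P} (hxy : x ≤ y) (hyz : y ≤ z),
    (map hyz).comp (map hxy) = map (hxy.trans hyz)

attribute [instance] PersMod.acg PersMod.mod

variable (k : Type u) [Field k] {P : Type v} [PartialOrder P]

/-- A morphism of persistence modules (a natural transformation). -/
structure PersHom (V : PersMod.{u, v, w} k P) (W : PersMod.{u, v, w'} k P) where
  app : ∀ x : P, V.space x →ₗ[k] W.space x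
  natural : ∀ {x y : P} (h : x ≤ y) (v : V.space x),
    app y (V.map h v) = W.map h (app x v)

/-- An isomorphism of persistence modules. -/
structure PersIso (V : PersMod.{u, v, w} k P) (W : PersMod.{u, v, w'} k P) where
  app : ∀ x : P, V.space x ≃ₗ[k] W.space x
  natural : ∀ {x y : P} (h : x ≤ y) (v : V.space x),
    app y (V.map h v) = W.map h (app x v)

/-- A subset `I` of a poset is convex if `x ≤ y ≤ z`, `x ∈ I`, `z ∈ I` imply `y ∈ I`. -/
def IsConvexIn (I : Set P) : Prop :=
  ∀ ⦃x y z : P⦄, x ∈ I → z ∈ I → x ≤ y → y ≤ z → y ∈ I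

/-- A subset `I` of a poset is connected if any two points of `I` are joined by a
zigzag path inside `I`. -/
def IsConnectedIn (I : Set P) : Prop :=
  ∀ x ∈ I, ∀ z ∈ I, ∃ (n : ℕ) (c : ℕ → P), (∀ i ≤ n, c i ∈ I) ∧ c 0 = x ∧ c n = z ∧
    ∀ i < n, c i ≤ c (i + 1) ∨ c (i + 1) ≤ c i

/-- An interval in a poset: nonempty, convex and connected. -/
def IsPosetInterval (I : Set P) : Prop :=
  I.Nonempty ∧ IsConvexIn I ∧ IsConnectedIn I

open Classical in
/-- The subspace of `k` used as the value of the constant module at `x`. -/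
noncomputable def constSub (I : Set P) (x : P) : Submodule k k :=
  if x ∈ I then ⊤ else ⊥

open Classical in
/-- The structure map of the constant module. -/
noncomputable def constMap (I : Set P) (x y : P) :
    constSub k I x →ₗ[k] constSub k I y :=
  LinearMap.codRestrict (constSub k I y)
    ((if y ∈ I then (LinearMap.id : k →ₗ[k] k) else 0).comp (constSub k I x).subtype)
    (fun c => by
      by_cases hy : y ∈ I
      · simp [constSub, hy]
      · simp only [hy, if_false, LinearMap.zero_comp, LinearMap.zero_apply]
        exact Submodule.zero_mem _)

open Classical in
/-- The constant (interval) module `M(I)` attached to a convex subset `I`. -/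
noncomputable def constMod (I : Set P) (hI : IsConvexIn I) : PersMod.{u, v, u} k P where
  space x := constSub k I x
  map {x y} _ := constMap k I x y
  map_id := fun x => by
    ext c
    by_cases hx : x ∈ I
    · simp [constMap, hx]
    · have hc : (c : k) = 0 := by
        have := c.2
        simpa only [constSub, hx, if_false, Submodule.mem_bot] using this
      simp [constMap, hx, hc]
  map_comp := fun {x y z} hxy hyz => by
    ext c
    by_cases hz : z ∈ I
    · by_cases hy : y ∈ I
      · simp [constMap, hy, hz]
      · have hx : x ∉ I := fun hx => hy (hI hx hz hxy hyz)
        have hc : (c : k) = 0 := by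
          have := c.2
          simpa only [constSub, hx, if_false, Submodule.mem_bot] using this
        simp [constMap, hy, hz, hc]
    · simp [constMap, hz]

/-- A submodule of a persistence module: a family of subspaces preserved by the
structure maps. -/
structure PersSubmod (V : PersMod.{u, v, w} k P) where
  carrier : ∀ x : P, Submodule k (V.space x)
  mapLe : ∀ {x y : P} (h : x ≤ y), ∀ v ∈ carrier x, V.map h v ∈ carrier y

/-- A submodule of a persistence module, viewed as a persistence module in its own
right. -/
def PersSubmod.toPersMod {V : PersMod.{u, v, w} k P} (U : PersSubmod k V) :
    PersMod.{u, v, w} k P where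
  space x := U.carrier x
  map {x y} h := (V.map h).restrict (U.mapLe h)
  map_id := fun x => by
    ext c
    simp [LinearMap.restrict_apply, V.map_id]
  map_comp := fun {x y z} hxy hyz => by
    ext c
    have := LinearMap.congr_fun (V.map_comp hxy hyz) (c : V.space x)
    simpa [LinearMap.restrict_apply] using this

/-- A persistence module is an interval module if it is isomorphic to a constant
module `M(I)` for some interval `I`. -/
def IsIntervalModule (V : PersMod.{u, v, w} k P) : Prop :=
  ∃ (I : Set P) (hI : IsPosetInterval I), Nonempty (PersIso k V (constMod k I hI.2.1))

/-- `A` is an internal direct sum decomposition of `V`: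
at each point the subspaces are independent and span everything. -/
def IsDecomp (V : PersMod.{u, v, w} k P) (A : Set (PersSubmod k V)) : Prop :=
  ∀ x : P, iSupIndep (fun U : A => (U : PersSubmod k V).carrier x) ∧
    ⨆ U : A, (U : PersSubmod k V).carrier x = ⊤

/-- An interval decomposition of `V`. -/
def IsIntervalDecomp (V : PersMod.{u, v, w} k P) (A : Set (PersSubmod k V)) : Prop :=
  IsDecomp k V A ∧ ∀ U ∈ A, IsIntervalModule k U.toPersMod

/-- `V` has an interval decomposition. -/
def HasIntervalDecomp (V : PersMod.{u, v, w} k P) : Prop :=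
  ∃ A : Set (PersSubmod k V), IsIntervalDecomp k V A

/-!
Fix `x ∈ I`. The multiplicity space of `V` at `x` is the span of the values `ψ_x(c)` of all
morphisms `ψ : M(I) → V`, taken modulo the common kernel of the maps `g_x` for all morphisms
`g : V → M(I)`; it is defined from `V` alone. In an interval decomposition of `V`, every composite
`M(I) → M(J) → M(I)` with `J ≠ I` vanishes: an endomorphism of `M(I)` vanishing at one point of
the connected set `I` vanishes everywhere, and either some point of `I` lies outside `J`, or the
connectedness of `J` gives `a ∈ I` comparable to some `b ∈ J \ I`, which kills the first map
(if `a ≤ b`) or the second (if `b ≤ a`). So the summands not isomorphic to `M(I)` contribute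
nothing, while the inclusions `M(I) ≅ U ↪ V` and projections `V ↠ U ≅ M(I)` of the summands
`U ≅ M(I)` form a biorthogonal system: their images form a basis of the multiplicity space.
-/

theorem linearIndependent_of_biorthogonal {ι R M : Type*} [Ring R] [AddCommGroup M] [Module R M]
    [DecidableEq ι] {v : ι → M} (f : ι → M →ₗ[R] R)
    (hf : ∀ i j, f i (v j) = if i = j then 1 else 0) : LinearIndependent R v := by
  rw [linearIndependent_iff']
  intro s c hs i hi
  simpa [hf, hi] using congrArg (f i) hs

namespace DirectSum.IsInternal

variable {R M N ι : Type*} [Ring R] [AddCommGroup M] [Module R M] [AddCommGroup N] [Module R N]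
  [DecidableEq ι] {A : ι → Submodule R M} {B : ι → Submodule R N}

noncomputable def proj (h : IsInternal A) (i : ι) : M →ₗ[R] A i :=
  component R ι (fun i => A i) i ∘ₗ (LinearEquiv.ofBijective (coeLinearMap A) h).symm.toLinearMap

theorem proj_apply (h : IsInternal A) (i : ι) (x : M) :
    h.proj i x = (LinearEquiv.ofBijective (coeLinearMap A) h).symm x i :=
  rfl

theorem coe_proj_of_mem (h : IsInternal A) (i : ι) {j : ι} {x : M} (hx : x ∈ A j) :
    (h.proj i x : M) = if i = j then x else 0 := by
  split_ifs with hij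
  · subst hij
    rw [proj_apply, h.ofBijective_coeLinearMap_of_mem hx]
  · rw [proj_apply, h.ofBijective_coeLinearMap_of_mem_ne (Ne.symm hij) hx, ZeroMemClass.coe_zero]

theorem exists_sum_proj (h : IsInternal A) (x : M) :
    ∃ t : Finset ι, ∑ i ∈ t, (h.proj i x : M) = x := by
  classical
  set e := LinearEquiv.ofBijective (coeLinearMap A) h
  refine ⟨(e.symm x).support, ?_⟩
  calc ∑ i ∈ (e.symm x).support, (h.proj i x : M) = coeLinearMap A (e.symm x) := by
        rw [coeLinearMap_eq_dfinsuppSum]; rfl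
    _ = x := e.apply_symm_apply x

theorem proj_map (hA : IsInternal A) (hB : IsInternal B) (f : M →ₗ[R] N)
    (hf : ∀ i, ∀ x ∈ A i, f x ∈ B i) (i : ι) (x : M) :
    (hB.proj i (f x) : N) = f (hA.proj i x) := by
  refine Submodule.iSup_induction A (motive := fun x => (hB.proj i (f x) : N) = f (hA.proj i x))
    (hA.submodule_iSup_eq_top ▸ Submodule.mem_top) (fun j x hx => ?_) (by simp)
    (fun x y hx hy => by simp [hx, hy])
  rw [hB.coe_proj_of_mem i (hf j x hx), hA.coe_proj_of_mem i hx]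
  split_ifs <;> simp

end DirectSum.IsInternal

theorem IsConnectedIn.induction_on {I : Set P} (hI : IsConnectedIn I) {p : P → Prop} {x y : P}
    (hx : x ∈ I) (hy : y ∈ I) (hpx : p x)
    (step : ∀ a ∈ I, ∀ b ∈ I, a ≤ b ∨ b ≤ a → p a → p b) : p y := by
  obtain ⟨n, c, hc, rfl, rfl, hcomp⟩ := hI x hx y hy
  suffices ∀ i ≤ n, p (c i) from this n le_rfl
  intro i hi
  induction i with
  | zero => exact hpx
  | succ i ih => exact step _ (hc i (by omega)) _ (hc _ hi) (hcomp i hi) (ih (by omega))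

theorem IsConnectedIn.exists_comparable_of_subset {I J : Set P} (hJ : IsConnectedIn J)
    (hIJ : I ⊆ J) {x j : P} (hx : x ∈ I) (hj : j ∈ J) (hjI : j ∉ I) :
    ∃ a ∈ I, ∃ b ∈ J, b ∉ I ∧ (a ≤ b ∨ b ≤ a) := by
  by_contra h
  refine hjI (hJ.induction_on (hIJ hx) hj hx fun a _ b hb hab ha => ?_)
  by_contra hbI
  exact h ⟨a, ha, b, hb, hbI, hab⟩

section IntervalMultiplicity

variable {k}

open scoped Classical

theorem coe_constMap {X : Type*} (I : Set X) (x y : X) (c : constSub k I x) :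
    (constMap k I x y c : k) = if y ∈ I then (c : k) else 0 := by
  by_cases hy : y ∈ I <;> simp [constMap, hy]

section ConstModBasic

variable {I : Set P} (hIc : IsConvexIn I)

theorem constMod_space_eq_zero {x : P} (hx : x ∉ I) (c : (constMod k I hIc).space x) :
    c = 0 := by
  have := c.2
  simp only [constSub, hx, if_false, Submodule.mem_bot] at this
  exact Subtype.ext this

theorem constMod_map_surjective {x y : P} (hx : x ∈ I) (h : x ≤ y) :
    Function.Surjective ((constMod k I hIc).map h) := by
  intro (c : constSub k I y)
  by_cases hy : y ∈ I
  · refine ⟨⟨c, by simp [constSub, hx]⟩, Subtype.ext ?_⟩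
    exact (coe_constMap I x y _).trans (if_pos hy)
  · exact ⟨0, (map_zero _).trans (constMod_space_eq_zero hIc hy c).symm⟩

theorem constMod_map_injective {x y : P} (hy : y ∈ I) (h : x ≤ y) :
    Function.Injective ((constMod k I hIc).map h) := fun (c c' : constSub k I x) hcc' => by
  have : (constMap k I x y c : k) = constMap k I x y c' := congrArg Subtype.val hcc'
  rw [coe_constMap, coe_constMap, if_pos hy, if_pos hy] at this
  exact Subtype.ext this

noncomputable def constOne {x : P} (hx : x ∈ I) : (constMod k I hIc).space x :=
  ⟨1, by simp [constSub, hx]⟩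

end ConstModBasic

namespace PersHom

variable {V₁ V₂ V₃ : PersMod k P}

def comp (β : PersHom k V₂ V₃) (α : PersHom k V₁ V₂) : PersHom k V₁ V₃ where
  app x := β.app x ∘ₗ α.app x
  natural h v := by simp only [LinearMap.comp_apply, α.natural, β.natural]

@[simp]
theorem comp_app_apply (β : PersHom k V₂ V₃) (α : PersHom k V₁ V₂) (x : P) (v : V₁.space x) :
    (β.comp α).app x v = β.app x (α.app x v) :=
  rfl

end PersHom

namespace PersIso

variable {V W : PersMod k P}

def toHom (φ : PersIso k V W) : PersHom k V W :=
  ⟨fun x => φ.app x, φ.natural⟩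

def invHom (φ : PersIso k V W) : PersHom k W V where
  app x := (φ.app x).symm
  natural {_ y} h c := (φ.app y).injective <| by
    simp only [LinearEquiv.coe_coe, LinearEquiv.apply_symm_apply, φ.natural]

@[simp]
theorem toHom_app_apply (φ : PersIso k V W) (x : P) (v : V.space x) :
    φ.toHom.app x v = φ.app x v :=
  rfl

@[simp]
theorem invHom_app_apply (φ : PersIso k V W) (x : P) (c : W.space x) :
    φ.invHom.app x c = (φ.app x).symm c :=
  rfl

theorem exists_eq_smul_symm_constOne {X : PersMod k P} {I : Set P} {hIc : IsConvexIn I}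
    (φ : PersIso k X (constMod k I hIc)) {x : P} (hx : x ∈ I) (u : X.space x) :
    ∃ c : k, u = c • (φ.app x).symm (constOne hIc hx) := by
  refine ⟨(φ.app x u).1, ?_⟩
  have h : φ.app x u = (φ.app x u).1 • constOne hIc hx :=
    Subtype.ext (mul_one _).symm
  rw [← map_smul, ← h, LinearEquiv.symm_apply_apply]

end PersIso

def PersSubmod.subtype {V : PersMod k P} (U : PersSubmod k V) : PersHom k U.toPersMod V where
  app x := (U.carrier x).subtype
  natural _ _ := rfl

section ConstMod

variable {I J : Set P} {hIc : IsConvexIn I} {hJc : IsConvexIn J}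

theorem PersHom.app_eq_zero_of_not_mem {V : PersMod k P} (α : PersHom k V (constMod k J hJc))
    {x : P} (hx : x ∉ J) : α.app x = 0 :=
  LinearMap.ext fun _ => constMod_space_eq_zero hJc hx _

theorem constMod_hom_app_eq_zero_of_le (α : PersHom k (constMod k I hIc) (constMod k J hJc))
    {a b : P} (hab : a ≤ b) (hbI : b ∉ I) (hbJ : b ∈ J) : α.app a = 0 := by
  refine LinearMap.ext fun c => constMod_map_injective hJc hbJ hab ?_
  rw [← α.natural, constMod_space_eq_zero hIc hbI ((constMod k I hIc).map hab c), map_zero,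
    LinearMap.zero_apply, map_zero]

theorem constMod_hom_app_eq_zero_of_ge (α : PersHom k (constMod k I hIc) (constMod k J hJc))
    {a b : P} (hba : b ≤ a) (hbI : b ∈ I) (hbJ : b ∉ J) : α.app a = 0 := by
  refine LinearMap.ext fun c => ?_
  obtain ⟨c, rfl⟩ := constMod_map_surjective hIc hbI hba c
  rw [α.natural, α.app_eq_zero_of_not_mem hbJ, LinearMap.zero_apply, map_zero,
    LinearMap.zero_apply]

theorem constMod_endo_app_eq_zero (hI : IsConnectedIn I)
    (γ : PersHom k (constMod k I hIc) (constMod k I hIc)) {a x : P} (ha : a ∈ I) (hx : x ∈ I)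
    (hγ : γ.app a = 0) : γ.app x = 0 := by
  refine hI.induction_on (p := fun y => γ.app y = 0) ha hx hγ fun y hy z _ hyz hγy => ?_
  refine LinearMap.ext fun c => ?_
  rcases hyz with hyz | hzy
  · obtain ⟨c, rfl⟩ := constMod_map_surjective hIc hy hyz c
    rw [γ.natural, hγy, LinearMap.zero_apply, map_zero, LinearMap.zero_apply]
  · refine constMod_map_injective hIc hy hzy ?_
    rw [← γ.natural, hγy, LinearMap.zero_apply, LinearMap.zero_apply, map_zero]

theorem constMod_comp_app_eq_zero (hI : IsConnectedIn I) (hJ : IsConnectedIn J) (hIJ : I ≠ J)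
    (α : PersHom k (constMod k I hIc) (constMod k J hJc))
    (β : PersHom k (constMod k J hJc) (constMod k I hIc)) (x : P) :
    (β.comp α).app x = 0 := by
  by_cases hx : x ∈ I
  swap
  · exact (β.comp α).app_eq_zero_of_not_mem hx
  suffices ∃ a ∈ I, α.app a = 0 ∨ β.app a = 0 by
    obtain ⟨a, ha, h⟩ := this
    refine constMod_endo_app_eq_zero hI (β.comp α) ha hx (LinearMap.ext fun c => ?_)
    rcases h with h | h <;> simp [h]
  by_cases hsub : I ⊆ J
  · obtain ⟨j, hjJ, hjI⟩ := Set.not_subset.mp fun h => hIJ (hsub.antisymm h)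
    obtain ⟨a, ha, b, hbJ, hbI, hab | hba⟩ := hJ.exists_comparable_of_subset hsub hx hjJ hjI
    · exact ⟨a, ha, .inl (constMod_hom_app_eq_zero_of_le α hab hbI hbJ)⟩
    · exact ⟨a, ha, .inr (constMod_hom_app_eq_zero_of_ge β hba hbJ hbI)⟩
  · obtain ⟨a, ha, haJ⟩ := Set.not_subset.mp hsub
    exact ⟨a, ha, .inl (α.app_eq_zero_of_not_mem haJ)⟩

end ConstMod

namespace IsDecomp

variable {V : PersMod k P} {A : Set (PersSubmod k V)}

theorem isInternal (hd : IsDecomp k V A) (x : P) :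
    DirectSum.IsInternal fun U : A => (U : PersSubmod k V).carrier x :=
  DirectSum.isInternal_submodule_of_iSupIndep_of_iSup_eq_top (hd x).1 (hd x).2

noncomputable def proj (hd : IsDecomp k V A) (U : A) :
    PersHom k V (U : PersSubmod k V).toPersMod where
  app x := (hd.isInternal x).proj U
  natural h v := Subtype.ext <| (hd.isInternal _).proj_map (hd.isInternal _) (V.map h)
    (fun U' v hv => (U' : PersSubmod k V).mapLe h v hv) U v

theorem proj_app_self (hd : IsDecomp k V A) (U : A) {x : P} (u : (U : PersSubmod k V).carrier x) :
    (hd.proj U).app x u = u :=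
  Subtype.ext <| ((hd.isInternal x).coe_proj_of_mem U u.2).trans (if_pos rfl)

theorem proj_app_of_ne (hd : IsDecomp k V A) {U U' : A} (hUU' : U ≠ U') {x : P}
    (u : (U' : PersSubmod k V).carrier x) : (hd.proj U).app x u = 0 :=
  Subtype.ext <| ((hd.isInternal x).coe_proj_of_mem U u.2).trans (if_neg hUU')

theorem exists_sum_proj_app (hd : IsDecomp k V A) {x : P} (v : V.space x) :
    ∃ t : Finset A, ∑ U ∈ t, ((hd.proj U).app x v).1 = v :=
  (hd.isInternal x).exists_sum_proj v

end IsDecomp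

section Multiplicity

variable (V : PersMod.{u, v, w} k P) {I : Set P} (hIc : IsConvexIn I)

noncomputable def kerHomsToConst (x : P) : Submodule k (V.space x) :=
  ⨅ g : PersHom k V (constMod k I hIc), LinearMap.ker (g.app x)

noncomputable def multiplicitySpace (x : P) :
    Submodule k (V.space x ⧸ kerHomsToConst V hIc x) :=
  ⨆ ψ : PersHom k (constMod k I hIc) V, LinearMap.range ((kerHomsToConst V hIc x).mkQ ∘ₗ ψ.app x)

abbrev summandsIsoConst (A : Set (PersSubmod k V)) : Type _ :=
  {T : PersSubmod k V // T ∈ A ∧ Nonempty (PersIso k T.toPersMod (constMod k I hIc))}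

variable {V hIc} {A : Set (PersSubmod k V)}

namespace summandsIsoConst

noncomputable def iso (T : summandsIsoConst V hIc A) :
    PersIso k T.1.toPersMod (constMod k I hIc) :=
  Classical.choice T.2.2

noncomputable def incl (T : summandsIsoConst V hIc A) : PersHom k (constMod k I hIc) V :=
  T.1.subtype.comp T.iso.invHom

noncomputable def proj (hd : IsDecomp k V A) (T : summandsIsoConst V hIc A) :
    PersHom k V (constMod k I hIc) :=
  T.iso.toHom.comp (hd.proj ⟨T.1, T.2.1⟩)

theorem proj_app_incl_app (hd : IsDecomp k V A) (T T' : summandsIsoConst V hIc A) (x : P)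
    (c : (constMod k I hIc).space x) :
    (proj hd T).app x ((incl T').app x c) = if T = T' then c else 0 := by
  split_ifs with h
  · subst h
    exact (congrArg (T.iso.app x) (hd.proj_app_self ⟨T.1, T.2.1⟩ ((T.iso.app x).symm c))).trans
      ((T.iso.app x).apply_symm_apply c)
  · have hne : (⟨T.1, T.2.1⟩ : A) ≠ ⟨T'.1, T'.2.1⟩ := fun h' =>
      h (Subtype.ext (congrArg (fun U : A => U.1) h'))
    exact (congrArg (T.iso.app x) (hd.proj_app_of_ne hne ((T'.iso.app x).symm c))).trans
      (map_zero _)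

end summandsIsoConst

theorem linearIndependent_mkQ_incl_app_constOne (hd : IsDecomp k V A) {x : P} (hx : x ∈ I) :
    LinearIndependent k fun T : summandsIsoConst V hIc A =>
      (kerHomsToConst V hIc x).mkQ ((T.incl).app x (constOne hIc hx)) := by
  refine linearIndependent_of_biorthogonal (fun T => (kerHomsToConst V hIc x).liftQ
    ((constSub k I x).subtype ∘ₗ (summandsIsoConst.proj hd T).app x)
    ((iInf_le _ _).trans (LinearMap.ker_le_ker_comp _ _))) fun T T' => ?_
  change ((summandsIsoConst.proj hd T).app x ((T'.incl).app x (constOne hIc hx))).1 = _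
  rw [summandsIsoConst.proj_app_incl_app]
  split_ifs <;> rfl

theorem IsDecomp.proj_app_mem_kerHomsToConst (hd : IsDecomp k V A) (hI : IsConnectedIn I)
    {U : A} (hUint : IsIntervalModule k (U : PersSubmod k V).toPersMod)
    (hU : ¬Nonempty (PersIso k (U : PersSubmod k V).toPersMod (constMod k I hIc)))
    (ψ : PersHom k (constMod k I hIc) V) (x : P) (c : (constMod k I hIc).space x) :
    ((hd.proj U).app x (ψ.app x c)).1 ∈ kerHomsToConst V hIc x := by
  obtain ⟨J, hJ, ⟨φ⟩⟩ := hUint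
  have hIJ : I ≠ J := by
    rintro rfl
    exact hU ⟨φ⟩
  refine Submodule.mem_iInf _ |>.2 fun g => LinearMap.mem_ker.2 ?_
  have h := LinearMap.congr_fun (constMod_comp_app_eq_zero hI hJ.2.2 hIJ
    (φ.toHom.comp ((hd.proj U).comp ψ)) (g.comp (U.1.subtype.comp φ.invHom)) x) c
  simp only [PersHom.comp_app_apply, PersIso.toHom_app_apply, PersIso.invHom_app_apply,
    LinearEquiv.symm_apply_apply, LinearMap.zero_apply] at h
  exact h

theorem multiplicitySpace_eq_span (hA : IsIntervalDecomp k V A) (hI : IsConnectedIn I) {x : P}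
    (hx : x ∈ I) :
    multiplicitySpace V hIc x = Submodule.span k (Set.range fun T : summandsIsoConst V hIc A =>
      (kerHomsToConst V hIc x).mkQ ((T.incl).app x (constOne hIc hx))) := by
  obtain ⟨hd, hint⟩ := hA
  refine le_antisymm (iSup_le fun ψ => ?_) (Submodule.span_le.2 ?_)
  · rintro _ ⟨c, rfl⟩
    obtain ⟨t, ht⟩ := hd.exists_sum_proj_app (ψ.app x c)
    rw [LinearMap.comp_apply, ← ht, map_sum]
    refine Submodule.sum_mem _ fun U _ => ?_
    by_cases hU : Nonempty (PersIso k (U : PersSubmod k V).toPersMod (constMod k I hIc))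
    · let T : summandsIsoConst V hIc A := ⟨U.1, U.2, hU⟩
      obtain ⟨a, ha⟩ := T.iso.exists_eq_smul_symm_constOne hx ((hd.proj U).app x (ψ.app x c))
      have ha' : ((hd.proj U).app x (ψ.app x c)).1 = a • (T.incl).app x (constOne hIc hx) :=
        congrArg Subtype.val ha
      rw [ha', map_smul]
      exact Submodule.smul_mem _ a (Submodule.subset_span (Set.mem_range_self T))
    · have h0 := (Submodule.Quotient.mk_eq_zero _).2
        (hd.proj_app_mem_kerHomsToConst hI (hint U.1 U.2) hU ψ x c)
      rw [Submodule.mkQ_apply, h0]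
      exact zero_mem _
  · rintro _ ⟨T, rfl⟩
    exact Submodule.mem_iSup_of_mem T.incl ⟨constOne hIc hx, rfl⟩

theorem lift_mk_summandsIsoConst_eq_lift_rank (hA : IsIntervalDecomp k V A) (hI : IsConnectedIn I)
    {x : P} (hx : x ∈ I) :
    Cardinal.lift.{w} (Cardinal.mk (summandsIsoConst V hIc A)) =
      Cardinal.lift.{max v w} (Module.rank k (multiplicitySpace V hIc x)) := by
  have hli := linearIndependent_mkQ_incl_app_constOne (hIc := hIc) hA.1 hx
  rw [multiplicitySpace_eq_span hA hI hx, rank_span hli]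
  exact (Cardinal.mk_range_eq_of_injective hli.injective).symm

end Multiplicity

end IntervalMultiplicity

/-- Theorem A (uniqueness of interval decompositions): for two interval
decompositions `V = ⊕_{U ∈ A} U = ⊕_{W ∈ B} W` and an interval `I`, the summands of
`A` isomorphic to `M(I)` and the summands of `B` isomorphic to `M(I)` have the same
cardinality. -/
theorem interval_decomp_multiplicity_unique (P : Type v) [PartialOrder P]
    (V : PersMod.{u, v, w} k P) (A B : Set (PersSubmod k V))
    (hA : IsIntervalDecomp k V A) (hB : IsIntervalDecomp k V B)
    (I : Set P) (hI : IsPosetInterval I) :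
    Cardinal.mk {T : PersSubmod k V // T ∈ A ∧
        Nonempty (PersIso k T.toPersMod (constMod k I hI.2.1))} =
      Cardinal.mk {T : PersSubmod k V // T ∈ B ∧
        Nonempty (PersIso k T.toPersMod (constMod k I hI.2.1))} := by
  obtain ⟨x, hx⟩ := hI.1
  exact Cardinal.lift_injective <|
    (lift_mk_summandsIsoConst_eq_lift_rank (hIc := hI.2.1) hA hI.2.2 hx).trans
      (lift_mk_summandsIsoConst_eq_lift_rank hB hI.2.2 hx).symm
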